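/- Let p ≥ 1, let v₁ and v₂ be symmetric positive definite p×p real matrices, let d > 0 and n₂ > 0 be real numbers, and let w ∈ ℝᵖ. For λ ≥ 0 define aMSE(λ) = d·trace((v₂ + λv₁)⁻²v₂) + n₂λ²·wᵀ(v₂ + λv₁)⁻²w. Then there exists ε > 0 such that aMSE(λ) < aMSE(0) for every λ ∈ (0, ε); note aMSE(0) = d·trace(v₂⁻¹). -/

import Mathlib

/-!
Write `G(λ) = (v₂ + λv₁)⁻¹`, so that `dG/dλ(0) = -v₂⁻¹v₁v₂⁻¹`. The bias term `n₂λ²·wᵀG(λ)ᵀG(λ)w`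
vanishes to second order at `λ = 0`, so only the variance term contributes to `aMSE'(0)`, and by
the product rule and cyclicity of the trace `aMSE'(0) = -2d·trace(v₂⁻¹v₁v₂⁻¹)`. This is negative
because `v₂⁻¹v₁v₂⁻¹` is positive definite, so `aMSE` decreases strictly just to the right of `0`.
-/

open Matrix Filter Topology

section RCLike

variable {𝕜 : Type*} [RCLike 𝕜] {n : Type*} [Fintype n] [DecidableEq n]

section Derivatives

-- Matrices carry no global norm; in finite dimension every choice gives the same derivatives.
attribute [local instance] Matrix.linftyOpNormedRing Matrix.linftyOpNormedAlgebra

theorem hasDerivAt_inv_add_smul {A : Matrix n n 𝕜} (hA : IsUnit A) (B : Matrix n n 𝕜) :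
    HasDerivAt (fun t : 𝕜 => (A + t • B)⁻¹) (-(A⁻¹ * B * A⁻¹)) 0 := by
  obtain ⟨u, rfl⟩ := hA
  have hline : HasDerivAt (fun t : 𝕜 => (u : Matrix n n 𝕜) + t • B) B 0 := by
    have := ((hasDerivAt_id' (0 : 𝕜)).smul_const B).const_add (u : Matrix n n 𝕜)
    rwa [one_smul] at this
  have := (hasFDerivAt_ringInverse (𝕜 := 𝕜) u).comp_hasDerivAt_of_eq 0 hline (by simp)
  simp only [Function.comp_def, ← nonsing_inv_eq_ringInverse, coe_units_inv] at this
  exact this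

theorem HasDerivAt.linearMap_comp {E F : Type*} [NormedAddCommGroup E] [NormedSpace 𝕜 E]
    [FiniteDimensional 𝕜 E] [NormedAddCommGroup F] [NormedSpace 𝕜 F] (L : E →ₗ[𝕜] F)
    {f : 𝕜 → E} {f' : E} {t : 𝕜} (hf : HasDerivAt f f' t) :
    HasDerivAt (fun s => L (f s)) (L f') t :=
  (LinearMap.toContinuousLinearMap L).hasFDerivAt.comp_hasDerivAt t hf

theorem HasDerivAt.matrix_transpose {M : 𝕜 → Matrix n n 𝕜} {M' : Matrix n n 𝕜} {t : 𝕜}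
    (hM : HasDerivAt M M' t) : HasDerivAt (fun s => (M s)ᵀ) M'ᵀ t :=
  hM.linearMap_comp (transposeLinearEquiv n n 𝕜 𝕜).toLinearMap

/-- `invSq M` is the paper's `M⁻²`. -/
noncomputable def invSq (M : Matrix n n 𝕜) : Matrix n n 𝕜 := (M⁻¹)ᵀ * M⁻¹

theorem hasDerivAt_invSq_add_smul {A : Matrix n n 𝕜} (hA : IsUnit A) (B : Matrix n n 𝕜) :
    HasDerivAt (fun t : 𝕜 => invSq (A + t • B))
      (-((A⁻¹ * B * A⁻¹)ᵀ * A⁻¹ + (A⁻¹)ᵀ * (A⁻¹ * B * A⁻¹))) 0 := by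
  have hinv := hasDerivAt_inv_add_smul hA B
  have := hinv.matrix_transpose.mul hinv
  simp only [zero_smul, add_zero, transpose_neg, neg_mul, mul_neg, ← neg_add] at this
  exact this

theorem hasDerivAt_trace_mul_add_sq_mul_dotProduct_mulVec {H : 𝕜 → Matrix n n 𝕜}
    {H' : Matrix n n 𝕜} (hH : HasDerivAt H H' 0) (A : Matrix n n 𝕜) (d c : 𝕜) (w : n → 𝕜) :
    HasDerivAt (fun t => d * trace (H t * A) + c * t ^ 2 * (w ⬝ᵥ (H t *ᵥ w)))
      (d * trace (H' * A)) 0 := by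
  have htrace := (hH.linearMap_comp (traceLinearMap n 𝕜 𝕜 ∘ₗ LinearMap.mulRight 𝕜 A)).const_mul d
  have hquad := hH.linearMap_comp (dotProductBilin 𝕜 𝕜 w ∘ₗ (mulVecBilin 𝕜 𝕜).flip w)
  have hsq := ((hasDerivAt_pow 2 (0 : 𝕜)).const_mul c).mul hquad
  exact (htrace.add hsq).congr_deriv (by simp)

end Derivatives

theorem trace_transpose_mul_inv_add_transpose_inv_mul_mul {A : Matrix n n 𝕜} (hA : IsUnit A)
    (hAs : A.IsSymm) (K : Matrix n n 𝕜) :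
    trace ((Kᵀ * A⁻¹ + (A⁻¹)ᵀ * K) * A) = 2 * trace K := by
  have hcancel : A⁻¹ * A = 1 := nonsing_inv_mul A ((isUnit_iff_isUnit_det A).mp hA)
  rw [transpose_nonsing_inv, hAs.eq, add_mul, Matrix.mul_assoc, hcancel, Matrix.mul_one, trace_add,
    trace_transpose, trace_conj' hA, two_mul]

open scoped ComplexOrder in
theorem posDef_inv_mul_mul_inv {A B : Matrix n n 𝕜} (hA : A.IsHermitian) (hAu : IsUnit A)
    (hB : B.PosDef) : (A⁻¹ * B * A⁻¹).PosDef := by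
  have := hB.conjTranspose_mul_mul_same
    (mulVec_injective_of_isUnit (isUnit_nonsing_inv_iff.mpr hAu))
  rwa [hA.inv.eq] at this

end RCLike

theorem HasDerivAt.eventually_lt_of_neg {f : ℝ → ℝ} {f' x : ℝ} (hf : HasDerivAt f f' x)
    (hf' : f' < 0) : ∀ᶠ y in 𝓝[>] x, f y < f x := by
  filter_upwards [hf.hasDerivWithinAt.limsup_slope_le' (s := Set.Ioi x) (lt_irrefl x) hf',
    self_mem_nhdsWithin] with y hslope hy
  rwa [slope_def_field, div_lt_iff₀ (sub_pos.mpr hy), zero_mul, sub_neg] at hslope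

section AMSE

variable {n : Type*} [Fintype n] [DecidableEq n] (v₁ v₂ : Matrix n n ℝ) (d n₂ : ℝ) (w : n → ℝ)

noncomputable def infoShrinkageAMSE (l : ℝ) : ℝ :=
  d * trace (invSq (v₂ + l • v₁) * v₂) + n₂ * l ^ 2 * (w ⬝ᵥ (invSq (v₂ + l • v₁) *ᵥ w))

variable {v₁ v₂}

theorem infoShrinkageAMSE_zero (hs : v₂.IsSymm) (hu : IsUnit v₂) :
    infoShrinkageAMSE v₁ v₂ d n₂ w 0 = d * trace v₂⁻¹ := by
  simp [infoShrinkageAMSE, invSq, transpose_nonsing_inv, hs.eq, Matrix.mul_assoc,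
    nonsing_inv_mul v₂ ((isUnit_iff_isUnit_det v₂).mp hu)]

theorem hasDerivAt_infoShrinkageAMSE_zero (hs : v₂.IsSymm) (hu : IsUnit v₂) :
    HasDerivAt (infoShrinkageAMSE v₁ v₂ d n₂ w) (-(2 * d * trace (v₂⁻¹ * v₁ * v₂⁻¹))) 0 := by
  have := hasDerivAt_trace_mul_add_sq_mul_dotProduct_mulVec (hasDerivAt_invSq_add_smul hu v₁)
    v₂ d n₂ w
  rw [neg_mul, trace_neg, trace_transpose_mul_inv_add_transpose_inv_mul_mul hu hs] at this
  exact this.congr_deriv (by ring)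

end AMSE

theorem amse_lt_amse_zero_of_small_lambda_general
    (p : ℕ) (hp : 1 ≤ p) (v₁ v₂ : Matrix (Fin p) (Fin p) ℝ)
    (hv₁ : v₁.PosDef) (hv₂ : v₂.PosDef)
    (d n₂ : ℝ) (hd : 0 < d) (w : Fin p → ℝ)
    (aMSE : ℝ → ℝ)
    (haMSE : ∀ l : ℝ, aMSE l =
      d * Matrix.trace (((v₂ + l • v₁)⁻¹)ᵀ * (v₂ + l • v₁)⁻¹ * v₂)
        + n₂ * l ^ 2 * (w ⬝ᵥ ((((v₂ + l • v₁)⁻¹)ᵀ * (v₂ + l • v₁)⁻¹) *ᵥ w))) :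
    (∃ ε > 0, ∀ l : ℝ, 0 < l → l < ε → aMSE l < aMSE 0) ∧
      aMSE 0 = d * Matrix.trace v₂⁻¹ := by
  obtain rfl : aMSE = infoShrinkageAMSE v₁ v₂ d n₂ w := funext haMSE
  have hs : v₂.IsSymm := isHermitian_iff_isSymm.mp hv₂.isHermitian
  refine ⟨?_, infoShrinkageAMSE_zero d n₂ w hs hv₂.isUnit⟩
  have : Nonempty (Fin p) := Fin.pos_iff_nonempty.mp hp
  have htrace : 0 < trace (v₂⁻¹ * v₁ * v₂⁻¹) :=
    (posDef_inv_mul_mul_inv hv₂.isHermitian hv₂.isUnit hv₁).trace_pos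
  have hderiv_neg : -(2 * d * trace (v₂⁻¹ * v₁ * v₂⁻¹)) < 0 :=
    neg_lt_zero.mpr (mul_pos (mul_pos two_pos hd) htrace)
  obtain ⟨ε, hε, hsub⟩ := mem_nhdsGT_iff_exists_Ioo_subset.mp
    ((hasDerivAt_infoShrinkageAMSE_zero d n₂ w hs hv₂.isUnit).eventually_lt_of_neg hderiv_neg)
  exact ⟨ε, hε, fun l hl₀ hlε => hsub ⟨hl₀, hlε⟩⟩

/-- Theorem 2 (generalized linear model, deterministic core): there is a range `(0, ε)` of the
dial parameter `λ` on which the asymptotic mean squared error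
`aMSE(λ) = d·trace((v₂ + λv₁)⁻² v₂) + n₂ λ²·wᵀ (v₂ + λv₁)⁻² w` (with `M⁻² = (M⁻¹)ᵀ M⁻¹`)
is strictly smaller than `aMSE(0) = d·trace(v₂⁻¹)`. -/
theorem amse_lt_amse_zero_of_small_lambda
    (p : ℕ) (hp : 1 ≤ p) (v₁ v₂ : Matrix (Fin p) (Fin p) ℝ)
    (hv₁ : v₁.PosDef) (hv₂ : v₂.PosDef)
    (d n₂ : ℝ) (hd : 0 < d) (hn₂ : 0 < n₂) (w : Fin p → ℝ)
    (aMSE : ℝ → ℝ)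
    (haMSE : ∀ l : ℝ, aMSE l =
      d * Matrix.trace (((v₂ + l • v₁)⁻¹)ᵀ * (v₂ + l • v₁)⁻¹ * v₂)
        + n₂ * l ^ 2 * (w ⬝ᵥ ((((v₂ + l • v₁)⁻¹)ᵀ * (v₂ + l • v₁)⁻¹) *ᵥ w))) :
    (∃ ε > 0, ∀ l : ℝ, 0 < l → l < ε → aMSE l < aMSE 0) ∧
      aMSE 0 = d * Matrix.trace v₂⁻¹ :=
  amse_lt_amse_zero_of_small_lambda_general p hp v₁ v₂ hv₁ hv₂ d n₂ hd w aMSE haMSE
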